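/- arXiv:math/0511299 — 2 statements merged into one kernel-verified Lean document; each statement's English description precedes it below -/
import Mathlib

section
/- With P_{2N}-probability at least 1−ε, for every h∈{1,…,m}: r₂((𝒞^h α₁^h)·θ_h) − r₂(α₂^h·θ_h) ≤ 4·[ ((1/N)Σ_{i=1}^{2N} θ_h(X_i)² Y_i²) / ((1/N)Σ_{i=N+1}^{2N} θ_h(X_i)²) ] · log(2m/ε)/N. -/
open MeasureTheory Finset
open scoped ENNReal

namespace Stmt6Aux

lemma sum_sq_expand {N : ℕ} (q z : Fin N → ℝ) (c : ℝ) :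
    ∑ i, (z i - c * q i) ^ 2
      = (∑ i, (z i) ^ 2) - 2 * c * (∑ i, q i * z i) + c ^ 2 * ∑ i, (q i) ^ 2 := by
  rw [Finset.mul_sum, Finset.mul_sum, ← Finset.sum_sub_distrib, ← Finset.sum_add_distrib]
  exact Finset.sum_congr rfl fun i _ => by ring

lemma crit {N : ℕ} (hN : 0 < N) (p y q z : Fin N → ℝ) (T L : ℝ)
    (hT : T = (∑ i, (p i) ^ 2 * (y i) ^ 2) + ∑ i, (q i) ^ 2 * (z i) ^ 2)
    (hL : 0 ≤ L)
    (hcond : ((∑ i, p i * y i) - ∑ i, q i * z i) ^ 2 ≤ 4 * T * L ∨ (∑ i, (q i) ^ 2) = 0) :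
    (1 / (N:ℝ)) * (∑ i, (z i - ((((1 / (N:ℝ)) * ∑ i, (p i) ^ 2) / ((1 / (N:ℝ)) * ∑ i, (q i) ^ 2))
          * ((∑ i, p i * y i) / (∑ i, (p i) ^ 2))) * q i) ^ 2)
      - (1 / (N:ℝ)) * (∑ i, (z i - ((∑ i, q i * z i) / (∑ i, (q i) ^ 2)) * q i) ^ 2)
      ≤ 4 * (((1 / (N:ℝ)) * T) / ((1 / (N:ℝ)) * ∑ i, (q i) ^ 2)) * (L / N) := by
  have hNpos : (0:ℝ) < N := by exact_mod_cast hN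
  by_cases hB : (∑ i, (q i) ^ 2) = 0
  · have hq : ∀ i, q i = 0 := by
      intro i
      have h2 : ∀ j ∈ (univ : Finset (Fin N)), (0:ℝ) ≤ (q j) ^ 2 := fun j _ => sq_nonneg _
      have := (Finset.sum_eq_zero_iff_of_nonneg h2).mp hB i (Finset.mem_univ i)
      exact pow_eq_zero_iff two_ne_zero |>.mp this
    have hzz : ∀ c : ℝ, ∑ i, (z i - c * q i) ^ 2 = ∑ i, (z i) ^ 2 := by
      intro c; exact Finset.sum_congr rfl fun i _ => by rw [hq i]; ring
    rw [hzz, hzz, hB]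
    simp
  · replace hcond := hcond.resolve_right hB
    have hBpos : 0 < ∑ i, (q i) ^ 2 :=
      lt_of_le_of_ne (Finset.sum_nonneg fun i _ => sq_nonneg _) (Ne.symm hB)
    have hc1 : (((1 / (N:ℝ)) * ∑ i, (p i) ^ 2) / ((1 / (N:ℝ)) * ∑ i, (q i) ^ 2))
          * ((∑ i, p i * y i) / (∑ i, (p i) ^ 2))
        = (∑ i, p i * y i) / (∑ i, (q i) ^ 2) := by
      rcases eq_or_ne (∑ i, (p i) ^ 2) 0 with hA | hA
      · have hp : ∀ i, p i = 0 := by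
          intro i
          have h2 : ∀ j ∈ (univ : Finset (Fin N)), (0:ℝ) ≤ (p j) ^ 2 := fun j _ => sq_nonneg _
          have := (Finset.sum_eq_zero_iff_of_nonneg h2).mp hA i (Finset.mem_univ i)
          exact pow_eq_zero_iff two_ne_zero |>.mp this
        have hSa : (∑ i, p i * y i) = 0 :=
          Finset.sum_eq_zero fun i _ => by rw [hp i]; ring
        rw [hA, hSa]
        simp
      · field_simp
    rw [sum_sq_expand, sum_sq_expand, hc1]
    have hLHS : (1 / (N:ℝ)) * ((∑ i, (z i) ^ 2)
          - 2 * ((∑ i, p i * y i) / (∑ i, (q i) ^ 2)) * (∑ i, q i * z i)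
          + ((∑ i, p i * y i) / (∑ i, (q i) ^ 2)) ^ 2 * ∑ i, (q i) ^ 2)
        - (1 / (N:ℝ)) * ((∑ i, (z i) ^ 2)
          - 2 * ((∑ i, q i * z i) / (∑ i, (q i) ^ 2)) * (∑ i, q i * z i)
          + ((∑ i, q i * z i) / (∑ i, (q i) ^ 2)) ^ 2 * ∑ i, (q i) ^ 2)
        = ((∑ i, p i * y i) - ∑ i, q i * z i) ^ 2 / ((N:ℝ) * ∑ i, (q i) ^ 2) := by
      field_simp
      ring
    have hRHS : 4 * (((1 / (N:ℝ)) * T) / ((1 / (N:ℝ)) * ∑ i, (q i) ^ 2)) * (L / N)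
        = (4 * T * L) / ((N:ℝ) * ∑ i, (q i) ^ 2) := by
      have hN0 : (N:ℝ) ≠ 0 := hNpos.ne'
      have hNB : (N:ℝ) * ∑ i, (q i) ^ 2 ≠ 0 := mul_ne_zero hN0 hB
      rw [mul_div_mul_left _ _ (by positivity : (1/(N:ℝ)) ≠ 0), eq_div_iff hNB]
      field_simp
    rw [hLHS, hRHS]
    gcongr

lemma sum_exp_prod {N : ℕ} (g : Fin N → ℝ) :
    ∑ s : Fin N → Bool, Real.exp (∑ i, (if s i then -(g i) else g i))
      = ∏ i, (Real.exp (-(g i)) + Real.exp (g i)) := by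
  have h1 : ∀ s : Fin N → Bool, Real.exp (∑ i, (if s i then -(g i) else g i))
      = ∏ i, Real.exp (if s i then -(g i) else g i) := fun s => Real.exp_sum _ _
  simp only [h1]
  rw [show (∏ i, (Real.exp (-(g i)) + Real.exp (g i)))
      = ∏ i, ∑ b ∈ (univ : Finset Bool), Real.exp (if b then -(g i) else g i) by
    exact Finset.prod_congr rfl fun i _ => by simp [Fintype.sum_bool]]
  rw [Finset.prod_univ_sum]
  exact Finset.sum_congr (by ext x; simp [Fintype.mem_piFinset]) (fun _ _ => rfl)

lemma hoeff_tail {N : ℕ} (d : Fin N → ℝ) (t V : ℝ) (ht : 0 < t) (hV : 0 < V)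
    (hd : ∑ i, (d i) ^ 2 ≤ 2 * V) :
    (((univ.filter fun s : Fin N → Bool =>
        t < ∑ i, (if s i then -(d i) else d i)).card : ℝ))
      ≤ 2 ^ N * Real.exp (-(t ^ 2) / (4 * V)) := by
  classical
  set lam := t / (2 * V) with hlam
  have hlampos : 0 < lam := by positivity
  set F := univ.filter fun s : Fin N → Bool => t < ∑ i, (if s i then -(d i) else d i) with hF
  have step1 : (F.card : ℝ) * Real.exp (lam * t)
      ≤ ∑ s : Fin N → Bool, Real.exp (lam * ∑ i, (if s i then -(d i) else d i)) := by
    calc (F.card : ℝ) * Real.exp (lam * t)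
        = ∑ _s ∈ F, Real.exp (lam * t) := by rw [Finset.sum_const, nsmul_eq_mul]
      _ ≤ ∑ s ∈ F, Real.exp (lam * ∑ i, (if s i then -(d i) else d i)) := by
          refine Finset.sum_le_sum fun s hs => ?_
          have := (Finset.mem_filter.mp hs).2
          exact Real.exp_le_exp.mpr (by nlinarith)
      _ ≤ ∑ s : Fin N → Bool, Real.exp (lam * ∑ i, (if s i then -(d i) else d i)) :=
          Finset.sum_le_sum_of_subset_of_nonneg (Finset.filter_subset _ _)
            (fun s _ _ => (Real.exp_pos _).le)
  have hmul : ∀ s : Fin N → Bool, lam * ∑ i, (if s i then -(d i) else d i)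
      = ∑ i, (if s i then -(lam * d i) else lam * d i) := by
    intro s
    rw [Finset.mul_sum]
    exact Finset.sum_congr rfl fun i _ => by split <;> ring
  have step2 : ∑ s : Fin N → Bool, Real.exp (lam * ∑ i, (if s i then -(d i) else d i))
      ≤ 2 ^ N * Real.exp (lam ^ 2 * V) := by
    simp only [hmul]
    rw [sum_exp_prod (fun i => lam * d i)]
    calc ∏ i, (Real.exp (-(lam * d i)) + Real.exp (lam * d i))
        ≤ ∏ i, 2 * Real.exp ((lam * d i) ^ 2 / 2) := by
          refine Finset.prod_le_prod (fun i _ => by positivity) (fun i _ => ?_)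
          have h := Real.cosh_le_exp_half_sq (lam * d i)
          rw [Real.cosh_eq] at h
          nlinarith
      _ = 2 ^ N * Real.exp (∑ i, (lam * d i) ^ 2 / 2) := by
          rw [Finset.prod_mul_distrib, Finset.prod_const, ← Real.exp_sum]
          simp
      _ ≤ 2 ^ N * Real.exp (lam ^ 2 * V) := by
          have h1 : ∑ i, (lam * d i) ^ 2 / 2 ≤ lam ^ 2 * V := by
            have h2 : ∑ i, (lam * d i) ^ 2 / 2 = lam ^ 2 / 2 * ∑ i, (d i) ^ 2 := by
              rw [Finset.mul_sum]; exact Finset.sum_congr rfl fun i _ => by ring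
            rw [h2]; nlinarith
          have h2 : (0:ℝ) ≤ 2 ^ N := by positivity
          exact mul_le_mul_of_nonneg_left (Real.exp_le_exp.mpr h1) h2
  have step3 : (F.card : ℝ) ≤ 2 ^ N * Real.exp (lam ^ 2 * V - lam * t) := by
    have h' : (F.card : ℝ) ≤ 2 ^ N * Real.exp (lam ^ 2 * V) / Real.exp (lam * t) :=
      (le_div_iff₀ (Real.exp_pos _)).mpr (step1.trans step2)
    rw [Real.exp_sub, ← mul_div_assoc]
    exact h'
  refine step3.trans (le_of_eq ?_)
  congr 1
  rw [hlam]
  field_simp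
  ring

lemma hoeff_count {N : ℕ} (d : Fin N → ℝ) (T L : ℝ) (hT : 0 ≤ T) (hL : 0 < L)
    (hd : ∑ i, (d i) ^ 2 ≤ 2 * T) :
    (((univ.filter fun s : Fin N → Bool =>
        4 * T * L < (∑ i, (if s i then -(d i) else d i)) ^ 2).card : ℝ))
      ≤ 2 * Real.exp (-L) * 2 ^ N := by
  classical
  rcases eq_or_lt_of_le hT with hT0 | hTpos
  · have hdz : ∀ i, d i = 0 := by
      intro i
      have h1 : ∑ j, (d j) ^ 2 ≤ 0 := by rw [← hT0] at hd; linarith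
      have h2 : ∀ j ∈ (univ : Finset (Fin N)), (0:ℝ) ≤ (d j) ^ 2 := fun j _ => sq_nonneg _
      have := (Finset.sum_eq_zero_iff_of_nonneg h2).mp
        (le_antisymm h1 (Finset.sum_nonneg h2)) i (Finset.mem_univ i)
      exact pow_eq_zero_iff two_ne_zero |>.mp this
    have hempty : (univ.filter fun s : Fin N → Bool =>
        4 * T * L < (∑ i, (if s i then -(d i) else d i)) ^ 2) = ∅ := by
      refine Finset.filter_eq_empty_iff.mpr fun s _ => ?_
      simp [hdz, ← hT0]
    rw [hempty]
    simp
    positivity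
  · set t := Real.sqrt (4 * T * L) with htdef
    have ht2 : t ^ 2 = 4 * T * L := Real.sq_sqrt (by positivity)
    have htpos : 0 < t := Real.sqrt_pos.mpr (by positivity)
    have key : ∀ x : ℝ, 4 * T * L < x ^ 2 → t < x ∨ t < -x := by
      intro x hx
      have h1 : t ^ 2 < x ^ 2 := by rw [ht2]; exact hx
      have habs : t < |x| := by nlinarith [sq_abs x, abs_nonneg x]
      exact lt_abs.mp habs
    have hsub : (univ.filter fun s : Fin N → Bool =>
          4 * T * L < (∑ i, (if s i then -(d i) else d i)) ^ 2)
        ⊆ (univ.filter fun s : Fin N → Bool => t < ∑ i, (if s i then -(d i) else d i))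
          ∪ (univ.filter fun s : Fin N → Bool =>
              t < ∑ i, (if s i then -(-(d i)) else -(d i))) := by
      intro s hs
      have h := (Finset.mem_filter.mp hs).2
      rcases key _ h with h1 | h1
      · exact Finset.mem_union_left _ (Finset.mem_filter.mpr ⟨Finset.mem_univ _, h1⟩)
      · refine Finset.mem_union_right _ (Finset.mem_filter.mpr ⟨Finset.mem_univ _, ?_⟩)
        have heq : ∑ i, (if s i then -(-(d i)) else -(d i))
            = -∑ i, (if s i then -(d i) else d i) := by
          rw [← Finset.sum_neg_distrib]
          exact Finset.sum_congr rfl fun i _ => by split <;> ring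
        rw [heq]; exact h1
    have hb1 := hoeff_tail d t T htpos hTpos hd
    have hb2 := hoeff_tail (fun i => -(d i)) t T htpos hTpos (by simpa using hd)
    have hcard := Finset.card_le_card hsub
    have hcard2 := Finset.card_union_le
      (univ.filter fun s : Fin N → Bool => t < ∑ i, (if s i then -(d i) else d i))
      (univ.filter fun s : Fin N → Bool => t < ∑ i, (if s i then -(-(d i)) else -(d i)))
    have hexp : Real.exp (-(t ^ 2) / (4 * T)) = Real.exp (-L) := by
      congr 1
      rw [ht2]
      field_simp
    calc (((univ.filter fun s : Fin N → Bool =>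
          4 * T * L < (∑ i, (if s i then -(d i) else d i)) ^ 2).card : ℝ))
        ≤ ((univ.filter fun s : Fin N → Bool =>
              t < ∑ i, (if s i then -(d i) else d i)).card : ℝ)
          + ((univ.filter fun s : Fin N → Bool =>
              t < ∑ i, (if s i then -(-(d i)) else -(d i))).card : ℝ) := by
          exact_mod_cast (hcard.trans hcard2)
      _ ≤ 2 ^ N * Real.exp (-(t ^ 2) / (4 * T)) + 2 ^ N * Real.exp (-(t ^ 2) / (4 * T)) :=
          add_le_add hb1 hb2
      _ = 2 * Real.exp (-L) * 2 ^ N := by rw [hexp]; ring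

def flipPerm {N : ℕ} (s : Fin N → Bool) : Equiv.Perm (Fin N ⊕ Fin N) where
  toFun := Sum.elim (fun i => if s i then Sum.inr i else Sum.inl i)
    (fun i => if s i then Sum.inl i else Sum.inr i)
  invFun := Sum.elim (fun i => if s i then Sum.inr i else Sum.inl i)
    (fun i => if s i then Sum.inl i else Sum.inr i)
  left_inv := by rintro (i | i) <;> by_cases h : s i <;> simp [h]
  right_inv := by rintro (i | i) <;> by_cases h : s i <;> simp [h]

@[simp] lemma flipPerm_inl {N : ℕ} (s : Fin N → Bool) (i : Fin N) :
    flipPerm s (Sum.inl i) = if s i then Sum.inr i else Sum.inl i := rfl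

@[simp] lemma flipPerm_inr {N : ℕ} (s : Fin N → Bool) (i : Fin N) :
    flipPerm s (Sum.inr i) = if s i then Sum.inl i else Sum.inr i := rfl

open scoped Classical in
lemma inner_bound {Ω : Type*} [MeasurableSpace Ω] (μ : Measure Ω) [IsProbabilityMeasure μ]
    {ι : Type*} [Fintype ι] (Φ : ι → Ω → Ω) (hΦ : ∀ s, Measurable (Φ s))
    (hinv : ∀ (s : ι) (E : Set Ω), MeasurableSet E → μ (Φ s ⁻¹' E) = μ E)
    (U : Set Ω) (K : ℝ) (hK : 0 ≤ K) (hι : 0 < Fintype.card ι)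
    (hcount : ∀ ω, ((Finset.univ.filter fun s : ι => Φ s ω ∈ U).card : ℝ)
      ≤ K * Fintype.card ι)
    (E : Set Ω) (hE : MeasurableSet E) (hEU : E ⊆ U) :
    μ E ≤ ENNReal.ofReal K := by
  have h2 : (Fintype.card ι : ℝ≥0∞) * μ E = ∑ s : ι, μ (Φ s ⁻¹' E) := by
    simp only [fun s : ι => hinv s E hE]
    rw [Finset.sum_const, Finset.card_univ, nsmul_eq_mul]
  have h3 : ∑ s : ι, μ (Φ s ⁻¹' E)
      = ∫⁻ ω, ∑ s : ι, (Φ s ⁻¹' E).indicator (fun _ => (1:ℝ≥0∞)) ω ∂μ := by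
    rw [lintegral_finset_sum _ (fun s _ => measurable_const.indicator ((hΦ s) hE))]
    exact Finset.sum_congr rfl fun s _ => (lintegral_indicator_one ((hΦ s) hE)).symm
  have h4 : ∀ ω, ∑ s : ι, (Φ s ⁻¹' E).indicator (fun _ => (1:ℝ≥0∞)) ω
      ≤ ENNReal.ofReal K * Fintype.card ι := by
    intro ω
    have hsum : ∑ s : ι, (Φ s ⁻¹' E).indicator (fun _ => (1:ℝ≥0∞)) ω
        = ((Finset.univ.filter fun s : ι => Φ s ω ∈ E).card : ℝ≥0∞) := by
      simp only [Set.indicator_apply, Set.mem_preimage]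
      rw [Finset.sum_boole]
    rw [hsum]
    have hcard : ((Finset.univ.filter fun s : ι => Φ s ω ∈ E).card : ℝ)
        ≤ K * Fintype.card ι := by
      refine le_trans ?_ (hcount ω)
      have hss : (Finset.univ.filter fun s : ι => Φ s ω ∈ E)
          ⊆ (Finset.univ.filter fun s : ι => Φ s ω ∈ U) := by
        intro s hs
        simp only [Finset.mem_filter] at hs ⊢
        exact ⟨hs.1, hEU hs.2⟩
      exact_mod_cast Finset.card_le_card hss
    calc ((Finset.univ.filter fun s : ι => Φ s ω ∈ E).card : ℝ≥0∞)
        = ENNReal.ofReal ((Finset.univ.filter fun s : ι => Φ s ω ∈ E).card : ℝ) := by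
          rw [ENNReal.ofReal_natCast]
      _ ≤ ENNReal.ofReal (K * Fintype.card ι) := ENNReal.ofReal_le_ofReal hcard
      _ = ENNReal.ofReal K * ENNReal.ofReal (Fintype.card ι : ℝ) := ENNReal.ofReal_mul hK
      _ = ENNReal.ofReal K * (Fintype.card ι : ℝ≥0∞) := by rw [ENNReal.ofReal_natCast]
  have h5 : (Fintype.card ι : ℝ≥0∞) * μ E ≤ ENNReal.ofReal K * Fintype.card ι := by
    rw [h2, h3]
    refine le_trans (lintegral_mono h4) ?_
    simp [lintegral_const, measure_univ]
  have hcard0 : (Fintype.card ι : ℝ≥0∞) ≠ 0 := Nat.cast_ne_zero.mpr hι.ne'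
  have hcardtop : (Fintype.card ι : ℝ≥0∞) ≠ ⊤ := ENNReal.natCast_ne_top _
  rwa [mul_comm (ENNReal.ofReal K) _, ENNReal.mul_le_mul_iff_right hcard0 hcardtop] at h5

end Stmt6Aux

/-- Theorem 3.1, transductive setting with `k = 1`.  With
`P_{2N}`-probability at least `1 − ε`, for every `h ∈ {1,…,m}`,
`r₂((𝒞^h α₁^h) θ_h) − r₂(α₂^h θ_h)
  ≤ 4 [ (1/N) ∑_{i=1}^{2N} θ_h(X_i)² Y_i² / ((1/N) ∑_{i=N+1}^{2N} θ_h(X_i)²) ]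
      log(2m/ε)/N`.
The training sample is indexed by `Sum.inl`, the test sample by `Sum.inr`. -/
theorem stmt6
    {𝒳 : Type*} [MeasurableSpace 𝒳]
    (N m : ℕ) (hN : 0 < N) (hm : 0 < m)
    (P2N : Measure ((Fin N ⊕ Fin N) → 𝒳 × ℝ)) [IsProbabilityMeasure P2N]
    -- exchangeability of `P_{2N}`
    (hexch : ∀ σ : Equiv.Perm (Fin N ⊕ Fin N),
      P2N.map (fun ω i => ω (σ i)) = P2N)
    -- the dictionary, an exchangeable function of `(X_1,…,X_{2N})`
    (θ : Fin m → ((Fin N ⊕ Fin N) → 𝒳) → 𝒳 → ℝ)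
    (hθexch : ∀ (h : Fin m) (σ : Equiv.Perm (Fin N ⊕ Fin N))
      (v : (Fin N ⊕ Fin N) → 𝒳), θ h (fun i => v (σ i)) = θ h v)
    (ε : ℝ) (hε : 0 < ε)
    -- the empirical risk on the test sample
    (r2 : ((Fin N ⊕ Fin N) → 𝒳 × ℝ) → (𝒳 → ℝ) → ℝ)
    (hr2 : r2 = fun ω g => (1 / (N : ℝ)) *
      ∑ i : Fin N, ((ω (Sum.inr i)).2 - g (ω (Sum.inr i)).1) ^ 2)
    (α1 α2 C : Fin m → ((Fin N ⊕ Fin N) → 𝒳 × ℝ) → ℝ)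
    (hα1 : α1 = fun h ω =>
      (∑ i : Fin N, θ h (fun j => (ω j).1) (ω (Sum.inl i)).1 * (ω (Sum.inl i)).2) /
        (∑ i : Fin N, (θ h (fun j => (ω j).1) (ω (Sum.inl i)).1) ^ 2))
    (hα2 : α2 = fun h ω =>
      (∑ i : Fin N, θ h (fun j => (ω j).1) (ω (Sum.inr i)).1 * (ω (Sum.inr i)).2) /
        (∑ i : Fin N, (θ h (fun j => (ω j).1) (ω (Sum.inr i)).1) ^ 2))
    (hC : C = fun h ω =>
      ((1 / (N : ℝ)) * ∑ i : Fin N, (θ h (fun j => (ω j).1) (ω (Sum.inl i)).1) ^ 2) /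
        ((1 / (N : ℝ)) * ∑ i : Fin N, (θ h (fun j => (ω j).1) (ω (Sum.inr i)).1) ^ 2)) :
    ENNReal.ofReal (1 - ε) ≤
      P2N {ω | ∀ h : Fin m,
        r2 ω (fun x => (C h ω * α1 h ω) * θ h (fun j => (ω j).1) x) -
            r2 ω (fun x => α2 h ω * θ h (fun j => (ω j).1) x) ≤
          4 * (((1 / (N : ℝ)) *
                ∑ i : Fin N ⊕ Fin N, (θ h (fun j => (ω j).1) (ω i).1) ^ 2 * ((ω i).2) ^ 2) /
              ((1 / (N : ℝ)) *
                ∑ i : Fin N, (θ h (fun j => (ω j).1) (ω (Sum.inr i)).1) ^ 2)) *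
            (Real.log (2 * m / ε) / N)} := by
  classical
  rcases le_or_gt 1 ε with hε1 | hε1
  · rw [ENNReal.ofReal_eq_zero.mpr (by linarith)]
    exact zero_le
  subst hr2 hα1 hα2 hC
  set L := Real.log (2 * (m : ℝ) / ε) with hLdef
  have hm1 : (1:ℝ) ≤ m := by exact_mod_cast hm
  have hL : 0 < L := Real.log_pos (by rw [lt_div_iff₀ hε]; linarith)
  set D : Fin m → Set ((Fin N ⊕ Fin N) → 𝒳 × ℝ) := fun h => {ω |
    4 * (∑ j : Fin N ⊕ Fin N, (θ h (fun j' => (ω j').1) ((ω j).1)) ^ 2 * ((ω j).2) ^ 2) * L <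
      ((∑ i : Fin N, θ h (fun j' => (ω j').1) ((ω (Sum.inl i)).1) * (ω (Sum.inl i)).2) -
        ∑ i : Fin N, θ h (fun j' => (ω j').1) ((ω (Sum.inr i)).1) * (ω (Sum.inr i)).2) ^ 2}
    with hD
  -- probability of the intersection of complements of bad events
  have hΦmeas : ∀ s : Fin N → Bool,
      Measurable (fun ω : (Fin N ⊕ Fin N) → 𝒳 × ℝ => fun j => ω (Stmt6Aux.flipPerm s j)) :=
    fun s => measurable_pi_lambda _ fun j => measurable_pi_apply _
  have hinv : ∀ (s : Fin N → Bool) (E : Set ((Fin N ⊕ Fin N) → 𝒳 × ℝ)), MeasurableSet E →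
      P2N ((fun ω => fun j => ω (Stmt6Aux.flipPerm s j)) ⁻¹' E) = P2N E := by
    intro s E hE
    rw [← Measure.map_apply (hΦmeas s) hE, hexch (Stmt6Aux.flipPerm s)]
  -- the counting bound
  have hcount : ∀ ω : (Fin N ⊕ Fin N) → 𝒳 × ℝ, ((Finset.univ.filter fun s : Fin N → Bool =>
        (fun j => ω (Stmt6Aux.flipPerm s j)) ∈ ⋃ h, D h).card : ℝ)
      ≤ ε * Fintype.card (Fin N → Bool) := by
    intro ω
    have hper : ∀ h : Fin m, ((Finset.univ.filter fun s : Fin N → Bool =>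
        (fun j => ω (Stmt6Aux.flipPerm s j)) ∈ D h).card : ℝ) ≤ ε / m * 2 ^ N := by
      intro h
      set T : ℝ := ∑ j : Fin N ⊕ Fin N,
        (θ h (fun j' => (ω j').1) ((ω j).1)) ^ 2 * ((ω j).2) ^ 2 with hTdef
      set dv : Fin N → ℝ := fun i =>
        θ h (fun j => (ω j).1) ((ω (Sum.inl i)).1) * (ω (Sum.inl i)).2 -
          θ h (fun j => (ω j).1) ((ω (Sum.inr i)).1) * (ω (Sum.inr i)).2 with hdv
      have hθs : ∀ s : Fin N → Bool,
          θ h (fun j' => (ω (Stmt6Aux.flipPerm s j')).1) = θ h (fun j => (ω j).1) :=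
        fun s => hθexch h (Stmt6Aux.flipPerm s) (fun j => (ω j).1)
      have hiff : ∀ s : Fin N → Bool,
          ((fun j => ω (Stmt6Aux.flipPerm s j)) ∈ D h ↔
            4 * T * L < (∑ i, (if s i then -(dv i) else dv i)) ^ 2) := by
        intro s
        rw [hD]
        simp only [Set.mem_setOf_eq]
        rw [hθs s]
        have e1 : (∑ j : Fin N ⊕ Fin N,
            (θ h (fun j => (ω j).1) ((ω (Stmt6Aux.flipPerm s j)).1)) ^ 2
              * ((ω (Stmt6Aux.flipPerm s j)).2) ^ 2) = T :=
          Equiv.sum_comp (Stmt6Aux.flipPerm s)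
            (fun j => (θ h (fun j => (ω j).1) ((ω j).1)) ^ 2 * ((ω j).2) ^ 2)
        rw [e1]
        have e2 : (∑ i : Fin N,
              θ h (fun j => (ω j).1) ((ω (Stmt6Aux.flipPerm s (Sum.inl i))).1)
                * (ω (Stmt6Aux.flipPerm s (Sum.inl i))).2)
            - ∑ i : Fin N,
              θ h (fun j => (ω j).1) ((ω (Stmt6Aux.flipPerm s (Sum.inr i))).1)
                * (ω (Stmt6Aux.flipPerm s (Sum.inr i))).2
            = ∑ i, (if s i then -(dv i) else dv i) := by
          rw [← Finset.sum_sub_distrib]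
          refine Finset.sum_congr rfl fun i _ => ?_
          rcases Bool.eq_false_or_eq_true (s i) with hs | hs <;>
            simp [hs, hdv] <;> ring
        rw [e2]
      have hfilter : (Finset.univ.filter fun s : Fin N → Bool =>
            (fun j => ω (Stmt6Aux.flipPerm s j)) ∈ D h)
          = (Finset.univ.filter fun s : Fin N → Bool =>
              4 * T * L < (∑ i, (if s i then -(dv i) else dv i)) ^ 2) :=
        Finset.filter_congr fun s _ => by rw [hiff s]
      rw [hfilter]
      have hT0 : 0 ≤ T := Finset.sum_nonneg fun j _ => by positivity
      have hTsplit : T = (∑ i : Fin N,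
            (θ h (fun j => (ω j).1) ((ω (Sum.inl i)).1)) ^ 2 * ((ω (Sum.inl i)).2) ^ 2)
          + ∑ i : Fin N,
            (θ h (fun j => (ω j).1) ((ω (Sum.inr i)).1)) ^ 2 * ((ω (Sum.inr i)).2) ^ 2 := by
        rw [hTdef, Fintype.sum_sum_type]
      have hdle : ∑ i, (dv i) ^ 2 ≤ 2 * T := by
        rw [hTsplit, mul_add, Finset.mul_sum, Finset.mul_sum, ← Finset.sum_add_distrib]
        refine Finset.sum_le_sum fun i _ => ?_
        simp only [hdv]
        nlinarith [sq_nonneg (θ h (fun j => (ω j).1) ((ω (Sum.inl i)).1) * (ω (Sum.inl i)).2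
          + θ h (fun j => (ω j).1) ((ω (Sum.inr i)).1) * (ω (Sum.inr i)).2)]
      refine (Stmt6Aux.hoeff_count dv T L hT0 hL hdle).trans ?_
      have hexpL : Real.exp (-L) = ε / (2 * m) := by
        rw [hLdef, Real.exp_neg, Real.exp_log (by positivity), inv_div]
      rw [hexpL]
      have hm0 : (m:ℝ) ≠ 0 := by positivity
      have h2 : 2 * (ε / (2 * (m:ℝ))) = ε / m := by
        field_simp
      rw [h2]
    have hsubU : (Finset.univ.filter fun s : Fin N → Bool =>
          (fun j => ω (Stmt6Aux.flipPerm s j)) ∈ ⋃ h, D h)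
        ⊆ Finset.univ.biUnion fun h : Fin m =>
            Finset.univ.filter fun s : Fin N → Bool =>
              (fun j => ω (Stmt6Aux.flipPerm s j)) ∈ D h := by
      intro s hs
      rcases Set.mem_iUnion.mp (Finset.mem_filter.mp hs).2 with ⟨h, hh⟩
      exact Finset.mem_biUnion.mpr ⟨h, Finset.mem_univ _,
        Finset.mem_filter.mpr ⟨Finset.mem_univ _, hh⟩⟩
    calc ((Finset.univ.filter fun s : Fin N → Bool =>
          (fun j => ω (Stmt6Aux.flipPerm s j)) ∈ ⋃ h, D h).card : ℝ)
        ≤ ((Finset.univ.biUnion fun h : Fin m =>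
            Finset.univ.filter fun s : Fin N → Bool =>
              (fun j => ω (Stmt6Aux.flipPerm s j)) ∈ D h).card : ℝ) := by
          exact_mod_cast Finset.card_le_card hsubU
      _ ≤ ∑ h : Fin m, ((Finset.univ.filter fun s : Fin N → Bool =>
            (fun j => ω (Stmt6Aux.flipPerm s j)) ∈ D h).card : ℝ) := by
          exact_mod_cast Finset.card_biUnion_le
      _ ≤ ∑ _h : Fin m, ε / m * 2 ^ N := Finset.sum_le_sum fun h _ => hper h
      _ = ε * Fintype.card (Fin N → Bool) := by
          rw [Finset.sum_const, Finset.card_univ, Fintype.card_fin, nsmul_eq_mul,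
            Fintype.card_fun, Fintype.card_bool, Fintype.card_fin]
          have hm0 : (m:ℝ) ≠ 0 := by positivity
          push_cast
          field_simp
  -- bound on measurable subsets of the union of bad events
  have hU : ∀ E : Set ((Fin N ⊕ Fin N) → 𝒳 × ℝ), MeasurableSet E → E ⊆ ⋃ h, D h →
      P2N E ≤ ENNReal.ofReal ε := by
    intro E hE hEU
    exact Stmt6Aux.inner_bound P2N _ hΦmeas hinv _ ε hε.le Fintype.card_pos
      (fun ω => by exact_mod_cast hcount ω) E hE hEU
  -- the hull argument
  have hmain : ENNReal.ofReal (1 - ε) ≤ P2N (⋂ h, (D h)ᶜ) := by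
    set Hm := toMeasurable P2N (⋂ h, (D h)ᶜ) with hHm
    have hHmeas : MeasurableSet Hm := measurableSet_toMeasurable P2N _
    have hHc : Hmᶜ ⊆ ⋃ h, D h := by
      intro ω hω
      by_contra hc
      have hmem : ω ∈ ⋂ h, (D h)ᶜ := by
        simp only [Set.mem_iInter, Set.mem_compl_iff]
        intro h hh
        exact hc (Set.mem_iUnion.mpr ⟨h, hh⟩)
      exact hω (subset_toMeasurable _ _ hmem)
    have hEbound := hU Hmᶜ hHmeas.compl hHc
    have h1 : (1:ℝ≥0∞) ≤ P2N (⋂ h, (D h)ᶜ) + ENNReal.ofReal ε := by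
      have hcompl := measure_add_measure_compl (μ := P2N) hHmeas
      rw [measure_univ] at hcompl
      calc (1:ℝ≥0∞) = P2N Hm + P2N Hmᶜ := hcompl.symm
        _ ≤ P2N Hm + ENNReal.ofReal ε := add_le_add_right hEbound _
        _ = P2N (⋂ h, (D h)ᶜ) + ENNReal.ofReal ε := by rw [hHm, measure_toMeasurable]
    have h2 : ENNReal.ofReal (1 - ε) + ENNReal.ofReal ε
        ≤ P2N (⋂ h, (D h)ᶜ) + ENNReal.ofReal ε := by
      rw [← ENNReal.ofReal_add (by linarith) hε.le,
        show (1 - ε + ε : ℝ) = 1 by ring, ENNReal.ofReal_one]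
      exact h1
    exact (ENNReal.add_le_add_iff_right ENNReal.ofReal_ne_top).mp h2
  refine le_trans hmain (measure_mono ?_)
  intro ω hω
  intro h
  have hωh : ω ∉ D h := by
    have := Set.mem_iInter.mp hω h
    simpa using this
  rw [hD] at hωh
  simp only [Set.mem_setOf_eq, not_lt] at hωh
  have hTsplit : (∑ j : Fin N ⊕ Fin N,
        (θ h (fun j' => (ω j').1) ((ω j).1)) ^ 2 * ((ω j).2) ^ 2)
      = (∑ i : Fin N,
          (θ h (fun j => (ω j).1) ((ω (Sum.inl i)).1)) ^ 2 * ((ω (Sum.inl i)).2) ^ 2)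
        + ∑ i : Fin N,
          (θ h (fun j => (ω j).1) ((ω (Sum.inr i)).1)) ^ 2 * ((ω (Sum.inr i)).2) ^ 2 := by
    rw [Fintype.sum_sum_type]
  exact Stmt6Aux.crit hN
    (fun i => θ h (fun j => (ω j).1) ((ω (Sum.inl i)).1))
    (fun i => (ω (Sum.inl i)).2)
    (fun i => θ h (fun j => (ω j).1) ((ω (Sum.inr i)).1))
    (fun i => (ω (Sum.inr i)).2)
    (∑ j : Fin N ⊕ Fin N, (θ h (fun j' => (ω j').1) ((ω j).1)) ^ 2 * ((ω j).2) ^ 2)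
    L hTsplit hL.le (Or.inl hωh)
end

section
/- Let χ:ℝ→ℝ. For any exchangeable functions λ, η : (𝒳×ℝ)^{(k+1)N} → ℝ₊ and any exchangeable choice θ : (𝒳×ℝ)^{(k+1)N} → Θ: 𝐏𝐫 exp{ λ[ (1/(kN))Σ_{i=N+1}^{(k+1)N} χ(θ(X_i)Y_i) − (1/N)Σ_{i=1}^{N} χ(θ(X_i)Y_i) ] − η } ≤ exp(−η) · exp{ (λ²(1+k)²/(2Nk²)) 𝐏{[χ(θ(X)Y) − 𝐏χ(θ(X)Y)]²} + (λ³(1+k)³/(6N²k³)) [ sup_{i≤(k+1)N} χ(θ(X_i)Y_i) − inf_{i≤(k+1)N} χ(θ(X_i)Y_i) ]³ }, where 𝐏𝐫 = ⊗_{i=1}^N 𝐏𝐫_i is the product of the conditional measures 𝐏𝐫_i that uniformly permute the k+1 points Z_i, Z_{i+N}, …, Z_{i+kN}; the reverse inequality also holds. -/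
open MeasureTheory

section StmtHelpers
open Finset


-- P1
lemma myP1 (t : ℝ) (ht : t ≤ 0) : Real.exp t ≤ 1 + t + t^2/2 := by
  have hmono : Monotone (fun s : ℝ => (1 - s + s^2/2) * Real.exp s) := by
    have hd : ∀ s : ℝ, HasDerivAt (fun s : ℝ => (1 - s + s^2/2) * Real.exp s)
        ((s^2/2) * Real.exp s) s := by
      intro s
      have h1 : HasDerivAt (fun s : ℝ => 1 - s + s^2/2) (-1 + s) s := by
        have := ((hasDerivAt_id s).const_mul (1:ℝ))
        have h2 : HasDerivAt (fun s : ℝ => s^2/2) s s := by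
          have := (hasDerivAt_pow 2 s).div_const 2
          simpa using this
        have h3 : HasDerivAt (fun s : ℝ => 1 - s) (-1) s := by
          simpa using ((hasDerivAt_id s).const_sub 1)
        exact h3.add h2
      have := h1.mul (Real.hasDerivAt_exp s)
      exact this.congr_deriv (by ring)
    apply monotone_of_deriv_nonneg
    · exact fun s => ((hd s).differentiableAt)
    · intro s
      rw [(hd s).deriv]
      positivity
  have h := hmono (show t ≤ 0 from ht)
  simp at h
  nlinarith [Real.exp_pos t, h, sq_nonneg t]


lemma myExp52 : Real.exp (5/2 : ℝ) ≤ 27/2 := by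
  have h5 : Real.exp (5 : ℝ) = Real.exp 1 ^ 5 := by
    rw [← Real.exp_nat_mul]; norm_num
  have he : Real.exp 1 < 2.7182818286 := Real.exp_one_lt_d9
  have h5lt : Real.exp (5:ℝ) < 182.25 := by
    rw [h5]
    calc Real.exp 1 ^ 5 < 2.7182818286^5 := by
          apply pow_lt_pow_left₀ he (le_of_lt (Real.exp_pos 1))
          norm_num
      _ < 182.25 := by norm_num
  nlinarith [Real.exp_pos (5/2:ℝ), Real.exp_add (5/2:ℝ) (5/2), h5lt]

lemma myP3 (t : ℝ) (h0 : 0 ≤ t) (h1 : t ≤ 5/2) : Real.exp t ≤ 1 + 5*t := by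
  have hc := convexOn_exp.2 (Set.mem_univ (0:ℝ)) (Set.mem_univ (5/2:ℝ))
    (show (0:ℝ) ≤ 1 - 2*t/5 by linarith) (show (0:ℝ) ≤ 2*t/5 by linarith)
    (show (1 - 2*t/5) + 2*t/5 = 1 by ring)
  simp only [smul_eq_mul, mul_zero, Real.exp_zero] at hc
  have heq : (0:ℝ) + 2*t/5 * (5/2) = t := by ring
  rw [heq] at hc
  nlinarith [hc, myExp52]


lemma myFact (m : ℕ) : 24 * m.factorial ≤ (m+4).factorial := by
  have h1 : (m+4).factorial = (m+4)*((m+3)*((m+2)*((m+1)*m.factorial))) := by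
    simp [Nat.factorial_succ]
  rw [h1]
  have h3 : 24 ≤ (m+4)*(m+3)*(m+2)*(m+1) := by
    calc (24:ℕ) = 4*3*2*1 := by norm_num
      _ ≤ (m+4)*(m+3)*(m+2)*(m+1) := by
          apply Nat.mul_le_mul (Nat.mul_le_mul (Nat.mul_le_mul (by omega) (by omega)) (by omega)) (by omega)
  calc 24 * m.factorial ≤ ((m+4)*(m+3)*(m+2)*(m+1)) * m.factorial :=
        Nat.mul_le_mul_right _ h3
    _ = (m+4)*((m+3)*((m+2)*((m+1)*m.factorial))) := by ring

lemma myExpTsum (t : ℝ) : Real.exp t = ∑' n : ℕ, t ^ n / n.factorial := by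
  rw [Real.exp_eq_exp_ℝ, NormedSpace.exp_eq_tsum_div]

lemma myP2 (t : ℝ) (ht : 0 ≤ t) :
    Real.exp t ≤ 1 + t + t^2/2 + t^3/6 + t^4 * Real.exp t / 24 := by
  have hsum : Summable (fun n : ℕ => t ^ n / n.factorial) :=
    Real.summable_pow_div_factorial t
  have hsplit : (∑ n ∈ Finset.range 4, t ^ n / (n.factorial : ℝ)) +
      (∑' n : ℕ, t ^ (n+4) / ((n+4).factorial : ℝ)) = Real.exp t := by
    rw [myExpTsum t]
    simpa using Summable.sum_add_tsum_nat_add (f := fun n : ℕ => t ^ n / n.factorial) 4 hsum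
  have hsum2 : Summable (fun n : ℕ => t ^ (n+4) / ((n+4).factorial : ℝ)) :=
    (summable_nat_add_iff 4).2 hsum
  have htail : (∑' n : ℕ, t ^ (n + 4) / ((n+4).factorial : ℝ)) ≤
      ∑' n : ℕ, t^4/24 * (t ^ n / n.factorial) := by
    apply Summable.tsum_le_tsum _ hsum2 (hsum.mul_left _)
    intro n
    have heq : t^4/24 * (t ^ n / n.factorial) = t^(n+4) / (24 * n.factorial) := by
      rw [pow_add]; ring
    rw [heq]
    apply div_le_div_of_nonneg_left (by positivity) (by positivity)
    exact_mod_cast myFact n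
  have htail2 : (∑' n : ℕ, t^4/24 * (t ^ n / n.factorial)) = t^4 * Real.exp t / 24 := by
    rw [tsum_mul_left, ← myExpTsum]; ring
  have hhead : ∑ n ∈ Finset.range 4, t ^ n / (n.factorial : ℝ) = 1 + t + t^2/2 + t^3/6 := by
    norm_num [Finset.sum_range_succ, Nat.factorial]
  rw [hhead] at hsplit
  linarith [htail.trans_eq htail2, hsplit]

lemma mypoly (M a : ℝ) (hM : 0 ≤ M) (ha : 0 ≤ a) (h6 : (M+a)^2 ≤ 6) :
    a*(M^2/6 + M^3*(1+5*M)/24) ≤ (M+a)^3/6 := by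
  have h0 : 0 ≤ 6 - (M+a)^2 := by linarith
  nlinarith [mul_nonneg (mul_nonneg ha (mul_nonneg hM hM)) h0,
    mul_nonneg (mul_nonneg (mul_nonneg ha ha) hM) h0,
    mul_nonneg (mul_nonneg ha hM) h0,
    mul_nonneg (mul_nonneg (mul_nonneg ha ha) ha) h0,
    mul_nonneg (mul_nonneg ha hM) (sq_nonneg (M - 2*a)),
    mul_nonneg (mul_nonneg ha ha) (sq_nonneg (M - 2*a)),
    mul_nonneg ha (sq_nonneg (M - 2*a)),
    mul_nonneg (mul_nonneg ha hM) hM, mul_nonneg (mul_nonneg ha ha) hM,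
    mul_nonneg (mul_nonneg (mul_nonneg ha hM) hM) hM,
    sq_nonneg (M+a), mul_nonneg ha hM]

set_option maxHeartbeats 1000000 in
lemma scalarC {n : ℕ} (t : Fin (n+1) → ℝ) (hsum : ∑ j, t j = 0) (R : ℝ)
    (hR : ∀ j j', t j - t j' ≤ R) :
    ∑ j, Real.exp (t j) ≤
      (n+1 : ℝ) * Real.exp ((1/(2*(n+1 : ℝ))) * ∑ j, (t j)^2 + R^3/6) := by
  have hnpos : (0:ℝ) < (n+1 : ℝ) := by positivity
  obtain ⟨jM, -, hjM⟩ := Finset.exists_max_image Finset.univ t ⟨0, Finset.mem_univ 0⟩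
  obtain ⟨jm, -, hjm⟩ := Finset.exists_min_image Finset.univ t ⟨0, Finset.mem_univ 0⟩
  have hcard : ∀ c : ℝ, (∑ _j : Fin (n+1), c) = (n+1 : ℝ) * c := by
    intro c
    rw [Finset.sum_const, Finset.card_univ, Fintype.card_fin, nsmul_eq_mul]
    push_cast; ring
  set M := t jM with hMdef
  set a := -(t jm) with hadef
  clear_value M a
  have hM0 : 0 ≤ M := by
    have h1 : ∑ j, t j ≤ ∑ _j : Fin (n+1), M :=
      Finset.sum_le_sum (fun j _ => hjM j (Finset.mem_univ j))
    rw [hsum, hcard] at h1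
    nlinarith [h1]
  have ha0 : 0 ≤ a := by
    have h1 : (∑ _j : Fin (n+1), (-a)) ≤ ∑ j, t j := by
      apply Finset.sum_le_sum
      intro j _
      have := hjm j (Finset.mem_univ j)
      rw [hadef]; linarith
    rw [hsum, hcard] at h1
    nlinarith [h1]
  have hMa : M + a ≤ R := by
    have := hR jM jm; rw [← hMdef] at this
    have h2 : t jm = -a := by rw [hadef]; ring
    rw [h2] at this; linarith
  have hR0 : (0:ℝ) ≤ R := le_trans (by linarith) hMa
  have hs2 : (0:ℝ) ≤ ∑ j, (t j)^2 := Finset.sum_nonneg (fun j _ => sq_nonneg _)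
  have hcube : (M+a)^3 ≤ R^3 := pow_le_pow_left₀ (by linarith) hMa 3
  by_cases hc : 6*M ≤ (M+a)^3
  · calc ∑ j, Real.exp (t j) ≤ ∑ _j : Fin (n+1), Real.exp M :=
          Finset.sum_le_sum (fun j _ => Real.exp_le_exp.2 (hjM j (Finset.mem_univ j)))
      _ = (n+1 : ℝ) * Real.exp M := hcard _
      _ ≤ (n+1 : ℝ) * Real.exp ((1/(2*(n+1 : ℝ))) * ∑ j, (t j)^2 + R^3/6) := by
          apply mul_le_mul_of_nonneg_left _ (le_of_lt hnpos)
          apply Real.exp_le_exp.2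
          have h2 : 0 ≤ (1/(2*(n+1 : ℝ))) * ∑ j, (t j)^2 := by positivity
          nlinarith [hcube, hc, h2]
  · push_neg at hc
    have hMpos : 0 < M := by nlinarith [pow_nonneg (by linarith : (0:ℝ) ≤ M + a) 3]
    have hs6 : (M+a)^2 ≤ 6 := by
      by_contra hgt
      push_neg at hgt
      have h1 : 6*(M+a) < (M+a)^3 := by nlinarith [hgt, hMpos, ha0]
      linarith
    have hM52 : M ≤ 5/2 := by nlinarith [hs6, ha0, hM0]
    have hK0 : (0:ℝ) ≤ M^2/6 + M^3*(1+5*M)/24 := by positivity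
    have hpt : ∀ j, Real.exp (t j) ≤
        1 + t j + (t j)^2/2 + max (t j) 0 * (M^2/6 + M^3*(1+5*M)/24) := by
      intro j
      rcases le_or_gt (t j) 0 with h | h
      · have h1 := myP1 (t j) h
        have h2 : 0 ≤ max (t j) 0 * (M^2/6 + M^3*(1+5*M)/24) :=
          mul_nonneg (le_max_right _ _) hK0
        linarith
      · have h1 := myP2 (t j) h.le
        have htM : t j ≤ M := hjM j (Finset.mem_univ j)
        have hexp : Real.exp (t j) ≤ 1 + 5*M :=
          (Real.exp_le_exp.2 htM).trans (myP3 M hM0 hM52)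
        rw [max_eq_left h.le]
        have ht2 : (t j)^2 ≤ M^2 := by nlinarith
        have e1 : (t j)^3 ≤ t j * M^2 := by nlinarith [mul_le_mul_of_nonneg_left ht2 h.le]
        have ht3 : (t j)^3 ≤ M^3 := pow_le_pow_left₀ h.le htM 3
        have h15 : (0:ℝ) ≤ 1+5*M := by linarith
        have e2 : (t j)^4 * Real.exp (t j) ≤ t j * (M^3*(1+5*M)) := by
          calc (t j)^4 * Real.exp (t j) ≤ (t j)^4 * (1+5*M) :=
                mul_le_mul_of_nonneg_left hexp (by positivity)
            _ = (t j * (t j)^3) * (1+5*M) := by ring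
            _ ≤ (t j * M^3) * (1+5*M) := by
                apply mul_le_mul_of_nonneg_right _ h15
                exact mul_le_mul_of_nonneg_left ht3 h.le
            _ = t j * (M^3*(1+5*M)) := by ring
        nlinarith [h1, e1, e2]
    have hsum2 : ∑ j, Real.exp (t j) ≤
        (n+1 : ℝ) + (∑ j, (t j)^2)/2 + (∑ j, max (t j) 0) * (M^2/6 + M^3*(1+5*M)/24) := by
      calc ∑ j, Real.exp (t j)
          ≤ ∑ j, (1 + t j + (t j)^2/2 + max (t j) 0 * (M^2/6 + M^3*(1+5*M)/24)) :=
            Finset.sum_le_sum (fun j _ => hpt j)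
        _ = (∑ _j : Fin (n+1), (1:ℝ)) + (∑ j, t j) + (∑ j, (t j)^2)/2
              + (∑ j, max (t j) 0) * (M^2/6 + M^3*(1+5*M)/24) := by
            rw [Finset.sum_add_distrib, Finset.sum_add_distrib, Finset.sum_add_distrib,
              ← Finset.sum_mul, ← Finset.sum_div]
        _ = (n+1 : ℝ) + (∑ j, (t j)^2)/2
              + (∑ j, max (t j) 0) * (M^2/6 + M^3*(1+5*M)/24) := by
            rw [hsum, hcard]; ring
    have hmaxb : ∑ j, max (t j) 0 ≤ (n+1 : ℝ) * a := by
      have h1 : ∀ j, max (t j) 0 = t j + max (-(t j)) 0 := by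
        intro j; rcases le_total (t j) 0 with h | h
        · rw [max_eq_right h, max_eq_left (by linarith)]; ring
        · rw [max_eq_left h, max_eq_right (by linarith)]; ring
      calc ∑ j, max (t j) 0 = ∑ j, (t j + max (-(t j)) 0) :=
            Finset.sum_congr rfl (fun j _ => h1 j)
        _ = (∑ j, t j) + ∑ j, max (-(t j)) 0 := Finset.sum_add_distrib
        _ = ∑ j, max (-(t j)) 0 := by rw [hsum]; ring
        _ ≤ ∑ _j : Fin (n+1), a := by
            apply Finset.sum_le_sum
            intro j _
            have h2 := hjm j (Finset.mem_univ j)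
            have h3 : t jm = -a := by rw [hadef]; ring
            exact max_le (by rw [h3] at h2; linarith) ha0
        _ = (n+1 : ℝ) * a := hcard _
    have haK : a*(M^2/6 + M^3*(1+5*M)/24) ≤ R^3/6 :=
      le_trans (mypoly M a hM0 ha0 hs6) (by nlinarith [hcube])
    have hfin : ∑ j, Real.exp (t j) ≤
        (n+1 : ℝ) * (1 + ((1/(2*(n+1 : ℝ))) * ∑ j, (t j)^2 + R^3/6)) := by
      have h2 : (∑ j, max (t j) 0) * (M^2/6 + M^3*(1+5*M)/24)
          ≤ (n+1 : ℝ) * a * (M^2/6 + M^3*(1+5*M)/24) :=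
        mul_le_mul_of_nonneg_right hmaxb hK0
      have h3 : (n+1 : ℝ) * (a * (M^2/6 + M^3*(1+5*M)/24)) ≤ (n+1 : ℝ) * (R^3/6) :=
        mul_le_mul_of_nonneg_left haK (le_of_lt hnpos)
      have h4 : (n+1 : ℝ) * ((1/(2*(n+1 : ℝ))) * ∑ j, (t j)^2) = (∑ j, (t j)^2)/2 := by
        field_simp
      nlinarith [hsum2, h2, h3, h4]
    calc ∑ j, Real.exp (t j)
        ≤ (n+1 : ℝ) * (1 + ((1/(2*(n+1 : ℝ))) * ∑ j, (t j)^2 + R^3/6)) := hfin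
      _ ≤ (n+1 : ℝ) * Real.exp ((1/(2*(n+1 : ℝ))) * ∑ j, (t j)^2 + R^3/6) := by
          apply mul_le_mul_of_nonneg_left _ (le_of_lt hnpos)
          have := Real.add_one_le_exp ((1/(2*(n+1 : ℝ))) * ∑ j, (t j)^2 + R^3/6)
          linarith


lemma permFiberCard (n : ℕ) (u : Fin (n+1)) :
    (Finset.univ.filter (fun σ : Equiv.Perm (Fin (n+1)) => σ 0 = u)).card
      = n.factorial := by
  have hconst : ∀ v : Fin (n+1),
      (Finset.univ.filter (fun σ : Equiv.Perm (Fin (n+1)) => σ 0 = v)).card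
        = (Finset.univ.filter (fun σ : Equiv.Perm (Fin (n+1)) => σ 0 = u)).card := by
    intro v
    apply Finset.card_bij' (fun σ _ => Equiv.swap v u * σ) (fun σ _ => Equiv.swap v u * σ)
    · intro σ hσ
      simp only [Finset.mem_filter, Finset.mem_univ, true_and] at hσ ⊢
      simp [Equiv.Perm.mul_apply, hσ]
    · intro σ hσ
      simp only [Finset.mem_filter, Finset.mem_univ, true_and] at hσ ⊢
      simp [Equiv.Perm.mul_apply, hσ]
    · intro σ _; simp [← mul_assoc]
    · intro σ _; simp [← mul_assoc]
  have hcardperm : (Finset.univ : Finset (Equiv.Perm (Fin (n+1)))).card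
      = (n+1).factorial := by
    rw [Finset.card_univ, Fintype.card_perm, Fintype.card_fin]
  have hsum : ∑ v : Fin (n+1),
      (Finset.univ.filter (fun σ : Equiv.Perm (Fin (n+1)) => σ 0 = v)).card
        = (n+1).factorial := by
    rw [← hcardperm]
    exact (Finset.card_eq_sum_card_fiberwise
      (f := fun σ : Equiv.Perm (Fin (n+1)) => σ 0) (t := Finset.univ)
      (fun σ _ => Finset.mem_univ _)).symm
  rw [Finset.sum_congr rfl (fun v _ => hconst v)] at hsum
  simp only [Finset.sum_const, Finset.card_univ, Fintype.card_fin, smul_eq_mul] at hsum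
  have h2 : (n+1).factorial = (n+1) * n.factorial := rfl
  rw [h2] at hsum
  exact Nat.eq_of_mul_eq_mul_left (Nat.succ_pos n) hsum

lemma sumPermApply {n : ℕ} (h : Fin (n+1) → ℝ) :
    ∑ σ : Equiv.Perm (Fin (n+1)), h (σ 0) = (n.factorial : ℝ) * ∑ u, h u := by
  rw [← Finset.sum_fiberwise_of_maps_to
    (g := fun σ : Equiv.Perm (Fin (n+1)) => σ 0) (fun σ _ => Finset.mem_univ _)
    (f := fun σ : Equiv.Perm (Fin (n+1)) => h (σ 0))]
  rw [Finset.mul_sum]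
  apply Finset.sum_congr rfl
  intro u _
  have : ∀ σ ∈ Finset.univ.filter (fun σ : Equiv.Perm (Fin (n+1)) => σ 0 = u),
      h (σ 0) = h u := by
    intro σ hσ
    simp only [Finset.mem_filter] at hσ
    rw [hσ.2]
  rw [Finset.sum_congr rfl this, Finset.sum_const, permFiberCard n u, nsmul_eq_mul]


lemma sumSqMean {n : ℕ} (x : Fin n → ℝ) (m μ : ℝ) (hm : ∑ j, x j = n * m) :
    ∑ j, (x j - m)^2 ≤ ∑ j, (x j - μ)^2 := by
  have h1 : ∀ j ∈ Finset.univ, (x j - μ)^2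
      = ((x j - m)^2 + (2*(m-μ))*(x j)) + (μ^2 - m^2) := fun j _ => by ring
  rw [Finset.sum_congr rfl h1, Finset.sum_add_distrib, Finset.sum_add_distrib,
    ← Finset.mul_sum, hm, Finset.sum_const, Finset.card_univ, Fintype.card_fin,
    nsmul_eq_mul]
  nlinarith [mul_nonneg (Nat.cast_nonneg (α := ℝ) n) (sq_nonneg (m - μ))]

lemma coreProd {k N : ℕ} (hN : 0 < N) (v : Fin N → Fin (k+1) → ℝ)
    (hmean : ∀ i, ∑ u, v i u = 0) (R : ℝ)
    (hrange : ∀ i u u', v i u - v i u' ≤ R) (B : ℝ)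
    (hB : ∑ i, ∑ u, (v i u)^2 ≤ B) :
    (1/((Nat.factorial (k+1) : ℝ))^N) *
      ∑ τ : Fin N → Equiv.Perm (Fin (k+1)), Real.exp (∑ i, v i (τ i 0))
      ≤ Real.exp ((1/(2*((k:ℝ)+1))) * B + (N : ℝ) * R^3/6) := by
  have hfacpos : (0:ℝ) < ((k+1).factorial : ℝ) := by positivity
  have hswap : ∑ τ : Fin N → Equiv.Perm (Fin (k+1)), Real.exp (∑ i, v i (τ i 0))
      = ∏ i, ∑ σ : Equiv.Perm (Fin (k+1)), Real.exp (v i (σ 0)) := by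
    have h1 : ∀ τ : Fin N → Equiv.Perm (Fin (k+1)),
        Real.exp (∑ i, v i (τ i 0)) = ∏ i, Real.exp (v i (τ i 0)) :=
      fun τ => Real.exp_sum _ _
    rw [Finset.sum_congr rfl (fun τ _ => h1 τ)]
    rw [Finset.prod_univ_sum]
    rw [← Fintype.piFinset_univ]
  rw [hswap]
  -- bound each factor
  have hstep : ∀ i, ∑ σ : Equiv.Perm (Fin (k+1)), Real.exp (v i (σ 0))
      ≤ ((k+1).factorial : ℝ) *
        Real.exp ((1/(2*((k:ℝ)+1))) * ∑ u, (v i u)^2 + R^3/6) := by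
    intro i
    rw [sumPermApply (fun u => Real.exp (v i u))]
    have h2 := scalarC (v i) (hmean i) R (fun u u' => hrange i u u')
    have h3 : ((k.factorial : ℝ)) ≥ 0 := by positivity
    calc (k.factorial : ℝ) * ∑ u, Real.exp (v i u)
        ≤ (k.factorial : ℝ) * ((k+1 : ℝ) *
            Real.exp ((1/(2*(k+1 : ℝ))) * ∑ u, (v i u)^2 + R^3/6)) :=
          mul_le_mul_of_nonneg_left (by exact_mod_cast h2) h3
      _ = ((k+1).factorial : ℝ) *
            Real.exp ((1/(2*((k:ℝ)+1))) * ∑ u, (v i u)^2 + R^3/6) := by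
          rw [Nat.factorial_succ]
          push_cast
          ring
  have hprodle : ∏ i, (∑ σ : Equiv.Perm (Fin (k+1)), Real.exp (v i (σ 0)))
      ≤ ∏ i, (((k+1).factorial : ℝ) *
          Real.exp ((1/(2*((k:ℝ)+1))) * ∑ u, (v i u)^2 + R^3/6)) := by
    apply Finset.prod_le_prod
    · intro i _
      exact Finset.sum_nonneg (fun σ _ => (Real.exp_pos _).le)
    · intro i _
      exact hstep i
  have hprodeq : ∏ i, (((k+1).factorial : ℝ) *
        Real.exp ((1/(2*((k:ℝ)+1))) * ∑ u, (v i u)^2 + R^3/6))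
      = ((k+1).factorial : ℝ)^N *
        Real.exp (∑ i, ((1/(2*((k:ℝ)+1))) * ∑ u, (v i u)^2 + R^3/6)) := by
    rw [Finset.prod_mul_distrib, Finset.prod_const, Finset.card_univ, Fintype.card_fin,
      ← Real.exp_sum]
  have hexparg : ∑ i : Fin N, ((1/(2*((k:ℝ)+1))) * ∑ u, (v i u)^2 + R^3/6)
      ≤ (1/(2*((k:ℝ)+1))) * B + (N : ℝ) * R^3/6 := by
    rw [Finset.sum_add_distrib, ← Finset.mul_sum, Finset.sum_const, Finset.card_univ,
      Fintype.card_fin, nsmul_eq_mul]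
    have hco : (0:ℝ) ≤ 1/(2*((k:ℝ)+1)) := by positivity
    have := mul_le_mul_of_nonneg_left hB hco
    linarith
  calc (1/((Nat.factorial (k+1) : ℝ))^N) *
        ∏ i, (∑ σ : Equiv.Perm (Fin (k+1)), Real.exp (v i (σ 0)))
      ≤ (1/((Nat.factorial (k+1) : ℝ))^N) * (((k+1).factorial : ℝ)^N *
          Real.exp (∑ i, ((1/(2*((k:ℝ)+1))) * ∑ u, (v i u)^2 + R^3/6))) := by
        apply mul_le_mul_of_nonneg_left _ (by positivity)
        rw [← hprodeq]; exact hprodle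
    _ = Real.exp (∑ i, ((1/(2*((k:ℝ)+1))) * ∑ u, (v i u)^2 + R^3/6)) := by
        rw [← mul_assoc]
        rw [one_div, inv_mul_cancel₀ (by positivity), one_mul]
    _ ≤ Real.exp ((1/(2*((k:ℝ)+1))) * B + (N : ℝ) * R^3/6) :=
        Real.exp_le_exp.2 hexparg


noncomputable def vFun (k N : ℕ) (f : Fin (k+1) × Fin N → ℝ) (c : ℝ) :
    Fin N → Fin (k+1) → ℝ :=
  fun i u => c * (((∑ w, f (w,i)) - f (u,i))/((k:ℝ)*(N:ℝ)) - f (u,i)/(N:ℝ))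

set_option maxHeartbeats 1000000 in
lemma mainCore (N k : ℕ) (hN : 0 < N) (hk : 0 < k) (f : Fin (k+1) × Fin N → ℝ)
    (L ε : ℝ) (hL : 0 ≤ L) (hε : ε = 1 ∨ ε = -1) :
    (1/((Nat.factorial (k+1) : ℝ))^N) * ∑ τ : Fin N → Equiv.Perm (Fin (k+1)),
        Real.exp (∑ i, vFun k N f (ε*L) i (τ i 0))
      ≤ Real.exp (L^2 * (1+(k:ℝ))^2 / (2*(N:ℝ)*(k:ℝ)^2) *
            ((1/(((k:ℝ)+1)*(N:ℝ))) * ∑ p : Fin (k+1) × Fin N,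
              (f p - (1/(((k:ℝ)+1)*(N:ℝ))) * ∑ q : Fin (k+1) × Fin N, f q)^2)
          + L^3 * (1+(k:ℝ))^3 / (6*(N:ℝ)^2*(k:ℝ)^3) *
            (sSup (Set.range f) - sInf (Set.range f))^3) := by
  haveI : Nonempty (Fin N) := Fin.pos_iff_nonempty.1 hN
  have hk0 : ((k:ℝ)) ≠ 0 := Nat.cast_ne_zero.2 hk.ne'
  have hN0 : ((N:ℝ)) ≠ 0 := Nat.cast_ne_zero.2 hN.ne'
  have hkpos : (0:ℝ) < (k:ℝ) := by exact_mod_cast hk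
  have hNpos : (0:ℝ) < (N:ℝ) := by exact_mod_cast hN
  have hε2 : ε^2 = 1 := by rcases hε with h | h <;> rw [h] <;> norm_num
  set S : Fin N → ℝ := fun i => ∑ w, f (w,i) with hSdef
  set μ : ℝ := (1/(((k:ℝ)+1)*(N:ℝ))) * ∑ q : Fin (k+1) × Fin N, f q with hμdef
  set D : ℝ := sSup (Set.range f) - sInf (Set.range f) with hDdef
  have hub : ∀ p, f p ≤ sSup (Set.range f) := fun p =>
    le_csSup (Set.finite_range f).bddAbove ⟨p, rfl⟩
  have hlb : ∀ p, sInf (Set.range f) ≤ f p := fun p =>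
    csInf_le (Set.finite_range f).bddBelow ⟨p, rfl⟩
  have hD0 : 0 ≤ D := by
    obtain ⟨p⟩ := (inferInstance : Nonempty (Fin (k+1) × Fin N))
    have := hub p; have := hlb p
    rw [hDdef]; linarith
  set R : ℝ := L * ((1+(k:ℝ))/((k:ℝ)*(N:ℝ))) * D with hRdef
  set B : ℝ := L^2 * ((1+(k:ℝ))/((k:ℝ)*(N:ℝ)))^2 *
    (∑ p : Fin (k+1) × Fin N, (f p - μ)^2) with hBdef
  -- mean zero
  have hmean : ∀ i, ∑ u, vFun k N f (ε*L) i u = 0 := by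
    intro i
    have h1 : ∀ u ∈ Finset.univ, vFun k N f (ε*L) i u
        = (ε*L) * S i/((k:ℝ)*(N:ℝ)) - ((ε*L)/((k:ℝ)*(N:ℝ)) + (ε*L)/(N:ℝ)) * f (u,i) := by
      intro u _; simp only [vFun, hSdef]; ring
    rw [Finset.sum_congr rfl h1, Finset.sum_sub_distrib, ← Finset.mul_sum,
      Finset.sum_const, Finset.card_univ, Fintype.card_fin, nsmul_eq_mul]
    have h2 : (∑ u, f (u,i)) = S i := rfl
    rw [h2]
    push_cast
    field_simp
    ring
  -- range
  have hrange : ∀ i u u', vFun k N f (ε*L) i u - vFun k N f (ε*L) i u' ≤ R := by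
    intro i u u'
    have h1 : vFun k N f (ε*L) i u - vFun k N f (ε*L) i u'
        = (ε*L) * ((1+(k:ℝ))/((k:ℝ)*(N:ℝ))) * (f (u',i) - f (u,i)) := by
      simp only [vFun]
      field_simp
      ring
    rw [h1, hRdef]
    have hco : (0:ℝ) ≤ L * ((1+(k:ℝ))/((k:ℝ)*(N:ℝ))) := by positivity
    rcases hε with h | h <;> rw [h]
    · have hfd : f (u',i) - f (u,i) ≤ D := by
        have := hub (u',i); have := hlb (u,i); rw [hDdef]; linarith
      calc (1*L) * ((1+(k:ℝ))/((k:ℝ)*(N:ℝ))) * (f (u',i) - f (u,i))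
          = L * ((1+(k:ℝ))/((k:ℝ)*(N:ℝ))) * (f (u',i) - f (u,i)) := by ring
        _ ≤ L * ((1+(k:ℝ))/((k:ℝ)*(N:ℝ))) * D := mul_le_mul_of_nonneg_left hfd hco
    · have hfd : f (u,i) - f (u',i) ≤ D := by
        have := hub (u,i); have := hlb (u',i); rw [hDdef]; linarith
      calc (-1*L) * ((1+(k:ℝ))/((k:ℝ)*(N:ℝ))) * (f (u',i) - f (u,i))
          = L * ((1+(k:ℝ))/((k:ℝ)*(N:ℝ))) * (f (u,i) - f (u',i)) := by ring
        _ ≤ L * ((1+(k:ℝ))/((k:ℝ)*(N:ℝ))) * D := mul_le_mul_of_nonneg_left hfd hco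
  -- second moment
  have hB : ∑ i, ∑ u, (vFun k N f (ε*L) i u)^2 ≤ B := by
    have hstep : ∀ i, ∑ u, (vFun k N f (ε*L) i u)^2
        ≤ L^2 * ((1+(k:ℝ))/((k:ℝ)*(N:ℝ)))^2 * ∑ u, (f (u,i) - μ)^2 := by
      intro i
      have hv2 : ∀ u ∈ Finset.univ, (vFun k N f (ε*L) i u)^2
          = L^2 * ((1+(k:ℝ))/((k:ℝ)*(N:ℝ)))^2 * (f (u,i) - S i/((k:ℝ)+1))^2 := by
        intro u _
        simp only [vFun]
        have hSi : (∑ w, f (w,i)) = S i := rfl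
        rw [hSi]
        rcases hε with h | h <;> rw [h] <;> field_simp <;> ring
      rw [Finset.sum_congr rfl hv2, ← Finset.mul_sum]
      apply mul_le_mul_of_nonneg_left _ (by positivity)
      apply sumSqMean (x := fun u => f (u,i)) (m := S i/((k:ℝ)+1)) (μ := μ)
      have hcast : ((k+1 : ℕ):ℝ) = (k:ℝ)+1 := by push_cast; ring
      rw [hcast]
      have h2 : (∑ u, f (u,i)) = S i := rfl
      rw [h2]
      field_simp
    calc ∑ i, ∑ u, (vFun k N f (ε*L) i u)^2
        ≤ ∑ i, L^2 * ((1+(k:ℝ))/((k:ℝ)*(N:ℝ)))^2 * ∑ u, (f (u,i) - μ)^2 :=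
          Finset.sum_le_sum (fun i _ => hstep i)
      _ = L^2 * ((1+(k:ℝ))/((k:ℝ)*(N:ℝ)))^2 * ∑ i, ∑ u, (f (u,i) - μ)^2 := by
          rw [Finset.mul_sum]
      _ = B := by
          rw [hBdef]
          congr 1
          rw [Fintype.sum_prod_type, Finset.sum_comm]
  have hmain := coreProd hN (vFun k N f (ε*L)) hmean R hrange B hB
  apply hmain.trans
  apply le_of_eq
  congr 1
  rw [hBdef, hRdef, hμdef]
  field_simp
noncomputable def colPerm (k N : ℕ) (τ : Fin N → Equiv.Perm (Fin (k+1))) :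
    Equiv.Perm (Fin (k+1) × Fin N) where
  toFun p := (τ p.2 p.1, p.2)
  invFun p := ((τ p.2).symm p.1, p.2)
  left_inv p := by simp
  right_inv p := by simp

lemma rowSum {N k : ℕ} (f : Fin (k+1) × Fin N → ℝ) (i : Fin N)
    (σ : Equiv.Perm (Fin (k+1))) :
    ∑ j : Fin k, f (σ j.succ, i) = (∑ w, f (w,i)) - f (σ 0, i) := by
  have h1 : ∑ w : Fin (k+1), f (σ w, i) = ∑ w, f (w,i) :=
    Equiv.sum_comp σ (fun w => f (w,i))
  have h2 := Fin.sum_univ_succ (f := fun w => f (σ w, i))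
  linarith

lemma sumLin2 {N k : ℕ} (c : ℝ) (f : Fin (k+1) × Fin N → ℝ)
    (g : Fin N → Fin (k+1)) :
    c * (1/((k:ℝ)*(N:ℝ)) * (∑ i, ((∑ w, f (w,i)) - f (g i, i)))
        - 1/(N:ℝ) * ∑ i, f (g i, i))
      = ∑ i, vFun k N f c i (g i) := by
  have h1 : ∑ i, vFun k N f c i (g i)
      = (c/((k:ℝ)*(N:ℝ))) * (∑ i, ∑ w, f (w,i))
        - (c/((k:ℝ)*(N:ℝ)) + c/(N:ℝ)) * ∑ i, f (g i, i) := by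
    rw [Finset.mul_sum, Finset.mul_sum, ← Finset.sum_sub_distrib]
    exact Finset.sum_congr rfl (fun i _ => by simp only [vFun]; ring)
  rw [h1, Finset.sum_sub_distrib]
  ring

lemma summandEq {N k : ℕ} (f : Fin (k+1) × Fin N → ℝ) (L e : ℝ)
    (τ : Fin N → Equiv.Perm (Fin (k+1))) :
    Real.exp (L * (1/((k:ℝ)*(N:ℝ)) * (∑ j : Fin k, ∑ i : Fin N, f (τ i j.succ, i))
        - 1/(N:ℝ) * ∑ i : Fin N, f (τ i 0, i)) - e)
      = Real.exp ((∑ i, vFun k N f (1 * L) i (τ i 0)) + (-e)) := by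
  rw [sub_eq_add_neg]
  congr 2
  have hcomm : ∑ j : Fin k, ∑ i : Fin N, f (τ i j.succ, i)
      = ∑ i : Fin N, ((∑ w, f (w,i)) - f (τ i 0, i)) := by
    rw [Finset.sum_comm]
    exact Finset.sum_congr rfl (fun i _ => rowSum f i (τ i))
  rw [hcomm, ← sumLin2 (1 * L) f (fun i => τ i 0)]
  ring

lemma summandEq' {N k : ℕ} (f : Fin (k+1) × Fin N → ℝ) (L e : ℝ)
    (τ : Fin N → Equiv.Perm (Fin (k+1))) :
    Real.exp (L * (1/(N:ℝ) * (∑ i : Fin N, f (τ i 0, i))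
        - 1/((k:ℝ)*(N:ℝ)) * ∑ j : Fin k, ∑ i : Fin N, f (τ i j.succ, i)) - e)
      = Real.exp ((∑ i, vFun k N f (-1 * L) i (τ i 0)) + (-e)) := by
  rw [sub_eq_add_neg]
  congr 2
  have hcomm : ∑ j : Fin k, ∑ i : Fin N, f (τ i j.succ, i)
      = ∑ i : Fin N, ((∑ w, f (w,i)) - f (τ i 0, i)) := by
    rw [Finset.sum_comm]
    exact Finset.sum_congr rfl (fun i _ => rowSum f i (τ i))
  rw [hcomm, ← sumLin2 (-1 * L) f (fun i => τ i 0)]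
  ring

lemma keyLem (N k : ℕ) (hN : 0 < N) (hk : 0 < k) (f : Fin (k+1) × Fin N → ℝ)
    (L e ε : ℝ) (hL : 0 ≤ L) (hεe : ε = 1 ∨ ε = -1) :
    (1/((Nat.factorial (k+1):ℝ))^N) * ∑ τ : Fin N → Equiv.Perm (Fin (k+1)),
        Real.exp ((∑ i, vFun k N f (ε * L) i (τ i 0)) + (-e))
      ≤ Real.exp (-e) * Real.exp (L^2 * (1+(k:ℝ))^2/(2*(N:ℝ)*(k:ℝ)^2) *
            ((1/(((k:ℝ)+1)*(N:ℝ))) * ∑ p : Fin (k+1) × Fin N,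
              (f p - (1/(((k:ℝ)+1)*(N:ℝ))) * ∑ q : Fin (k+1) × Fin N, f q)^2)
          + L^3*(1+(k:ℝ))^3/(6*(N:ℝ)^2*(k:ℝ)^3) *
            (sSup (Set.range f) - sInf (Set.range f))^3) := by
  calc (1/((Nat.factorial (k+1):ℝ))^N) * ∑ τ : Fin N → Equiv.Perm (Fin (k+1)),
        Real.exp ((∑ i, vFun k N f (ε * L) i (τ i 0)) + (-e))
      = Real.exp (-e) * ((1/((Nat.factorial (k+1):ℝ))^N) *
          ∑ τ : Fin N → Equiv.Perm (Fin (k+1)),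
            Real.exp (∑ i, vFun k N f (ε * L) i (τ i 0))) := by
        rw [Finset.sum_congr rfl (fun τ _ => Real.exp_add _ _), ← Finset.sum_mul]
        ring
    _ ≤ _ := mul_le_mul_of_nonneg_left (mainCore N k hN hk f L ε hL hεe)
        (Real.exp_nonneg _)

end StmtHelpers

/-- Lemma 5.5.  Pointwise exponential moment inequality for
the conditional measure `𝐏𝐫 = ⊗ᵢ 𝐏𝐫ᵢ` which uniformly permutes, for each
`i ≤ N`, the `k+1` points `Z_i, Z_{i+N}, …, Z_{i+kN}`.  The sample is indexed
by `Fin (k+1) × Fin N`, the pair `(j, i)` standing for `Z_{i+jN}`; the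
training sample is the row `j = 0`. -/
theorem stmt18
    {𝒳 : Type*} [MeasurableSpace 𝒳]
    (N k : ℕ) (hN : 0 < N) (hk : 0 < k)
    (χ : ℝ → ℝ)
    (η lam : ((Fin (k + 1) × Fin N) → 𝒳 × ℝ) → ℝ)
    (hηnonneg : ∀ ω, 0 ≤ η ω) (hlamnonneg : ∀ ω, 0 ≤ lam ω)
    (hηexch : ∀ (σ : Equiv.Perm (Fin (k + 1) × Fin N)) ω,
      η (fun p => ω (σ p)) = η ω)
    (hlamexch : ∀ (σ : Equiv.Perm (Fin (k + 1) × Fin N)) ω,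
      lam (fun p => ω (σ p)) = lam ω)
    -- an exchangeable choice of `θ ∈ Θ`
    (θ : ((Fin (k + 1) × Fin N) → 𝒳 × ℝ) → 𝒳 → ℝ)
    (hθexch : ∀ (σ : Equiv.Perm (Fin (k + 1) × Fin N)) ω,
      θ (fun p => ω (σ p)) = θ ω)
    -- the conditional averaging operator `𝐏𝐫`
    (Pr : (((Fin (k + 1) × Fin N) → 𝒳 × ℝ) → ℝ) →
      ((Fin (k + 1) × Fin N) → 𝒳 × ℝ) → ℝ)
    (hPr : Pr = fun F ω => (1 / ((Nat.factorial (k + 1) : ℝ)) ^ N) *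
      ∑ τ : Fin N → Equiv.Perm (Fin (k + 1)),
        F (fun p => ω (τ p.2 p.1, p.2)))
    -- the empirical variance of `χ(θ(X)Y)` over all `(k+1)N` points
    (Var : ((Fin (k + 1) × Fin N) → 𝒳 × ℝ) → ℝ)
    (hVar : Var = fun ω => (1 / (((k : ℝ) + 1) * N)) *
      ∑ p : Fin (k + 1) × Fin N,
        (χ (θ ω (ω p).1 * (ω p).2) -
          (1 / (((k : ℝ) + 1) * N)) *
            ∑ q : Fin (k + 1) × Fin N, χ (θ ω (ω q).1 * (ω q).2)) ^ 2) :
    ∀ ω : (Fin (k + 1) × Fin N) → 𝒳 × ℝ,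
      (Pr (fun ω' => Real.exp (lam ω' *
          ((1 / ((k : ℝ) * N)) *
              (∑ j : Fin k, ∑ i : Fin N,
                χ (θ ω' (ω' (j.succ, i)).1 * (ω' (j.succ, i)).2)) -
            (1 / (N : ℝ)) *
              ∑ i : Fin N, χ (θ ω' (ω' (0, i)).1 * (ω' (0, i)).2)) -
          η ω')) ω ≤
        Real.exp (-η ω) *
          Real.exp (lam ω ^ 2 * (1 + (k : ℝ)) ^ 2 / (2 * N * (k : ℝ) ^ 2) * Var ω +
            lam ω ^ 3 * (1 + (k : ℝ)) ^ 3 / (6 * (N : ℝ) ^ 2 * (k : ℝ) ^ 3) *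
              (sSup (Set.range fun p : Fin (k + 1) × Fin N =>
                  χ (θ ω (ω p).1 * (ω p).2)) -
                sInf (Set.range fun p : Fin (k + 1) × Fin N =>
                  χ (θ ω (ω p).1 * (ω p).2))) ^ 3)) ∧
      (Pr (fun ω' => Real.exp (lam ω' *
          ((1 / (N : ℝ)) *
              (∑ i : Fin N, χ (θ ω' (ω' (0, i)).1 * (ω' (0, i)).2)) -
            (1 / ((k : ℝ) * N)) *
              ∑ j : Fin k, ∑ i : Fin N,
                χ (θ ω' (ω' (j.succ, i)).1 * (ω' (j.succ, i)).2)) -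
          η ω')) ω ≤
        Real.exp (-η ω) *
          Real.exp (lam ω ^ 2 * (1 + (k : ℝ)) ^ 2 / (2 * N * (k : ℝ) ^ 2) * Var ω +
            lam ω ^ 3 * (1 + (k : ℝ)) ^ 3 / (6 * (N : ℝ) ^ 2 * (k : ℝ) ^ 3) *
              (sSup (Set.range fun p : Fin (k + 1) × Fin N =>
                  χ (θ ω (ω p).1 * (ω p).2)) -
                sInf (Set.range fun p : Fin (k + 1) × Fin N =>
                  χ (θ ω (ω p).1 * (ω p).2))) ^ 3)) := by
  
  intro ω
  constructor
  · simp only [hPr, hVar]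
    refine (le_of_eq ?_).trans (keyLem N k hN hk
      (fun p : Fin (k+1) × Fin N => χ (θ ω (ω p).1 * (ω p).2))
      (lam ω) (η ω) 1 (hlamnonneg ω) (Or.inl rfl))
    congr 1
    apply Finset.sum_congr rfl
    intro τ _
    have hθ' : θ (fun p : Fin (k+1) × Fin N => ω (τ p.2 p.1, p.2)) = θ ω :=
      hθexch (colPerm k N τ) ω
    have hlam2 : lam (fun p : Fin (k+1) × Fin N => ω (τ p.2 p.1, p.2)) = lam ω :=
      hlamexch (colPerm k N τ) ω
    have heta2 : η (fun p : Fin (k+1) × Fin N => ω (τ p.2 p.1, p.2)) = η ω :=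
      hηexch (colPerm k N τ) ω
    rw [hlam2, heta2, hθ']
    exact summandEq (fun p : Fin (k+1) × Fin N => χ (θ ω (ω p).1 * (ω p).2))
      (lam ω) (η ω) τ
  · simp only [hPr, hVar]
    refine (le_of_eq ?_).trans (keyLem N k hN hk
      (fun p : Fin (k+1) × Fin N => χ (θ ω (ω p).1 * (ω p).2))
      (lam ω) (η ω) (-1) (hlamnonneg ω) (Or.inr rfl))
    congr 1
    apply Finset.sum_congr rfl
    intro τ _
    have hθ' : θ (fun p : Fin (k+1) × Fin N => ω (τ p.2 p.1, p.2)) = θ ω :=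
      hθexch (colPerm k N τ) ω
    have hlam2 : lam (fun p : Fin (k+1) × Fin N => ω (τ p.2 p.1, p.2)) = lam ω :=
      hlamexch (colPerm k N τ) ω
    have heta2 : η (fun p : Fin (k+1) × Fin N => ω (τ p.2 p.1, p.2)) = η ω :=
      hηexch (colPerm k N τ) ω
    rw [hlam2, heta2, hθ']
    exact summandEq' (fun p : Fin (k+1) × Fin N => χ (θ ω (ω p).1 * (ω p).2))
      (lam ω) (η ω) τ
end
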